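/- arXiv:math/0402315 — 9 statements merged into one kernel-verified Lean document; each statement's English description precedes it below -/
import Mathlib

section
/- There exists a bimultiplicative map ε: Q × Q → {1,−1} satisfying ε(α,α) = (−1)^{|α|²(|α|²+1)/2} for all α ∈ Q. -/
namespace ExistsEpsilonAux

lemma zmod2_mul_self (x : ZMod 2) : x * x = x := by revert x; decide

lemma zmod2_two_mul (x : ℤ) : ((2 * x : ℤ) : ZMod 2) = 0 := by
  rw [Int.cast_mul, show ((2:ℤ) : ZMod 2) = 0 by decide, zero_mul]

def u : ZMod 2 → ℤˣ := fun x => if x = 0 then 1 else -1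

lemma u_add (a b : ZMod 2) : u (a + b) = u a * u b := by revert a b; decide

lemma neg_one_zpow (m : ℤ) : (-1 : ℤˣ) ^ m = u (m : ZMod 2) := by
  rcases Int.even_or_odd m with ⟨k, hk⟩ | ⟨k, hk⟩
  · subst hk
    rw [show k + k = 2 * k by ring, zpow_mul,
      show ((-1:ℤˣ)^(2:ℤ)) = 1 by decide, one_zpow, zmod2_two_mul]
    rfl
  · subst hk
    rw [zpow_add, zpow_mul, show ((-1:ℤˣ)^(2:ℤ)) = 1 by decide, one_zpow, one_mul,
      show ((2 * k + 1 : ℤ) : ZMod 2) = 1 by rw [Int.cast_add, zmod2_two_mul, zero_add, Int.cast_one]]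
    rw [zpow_one]; rfl

section
variable {Q : Type*} [AddCommGroup Q]

/-- the target quadratic function mod 2 -/
def qf (B : Q →ₗ[ℤ] Q →ₗ[ℤ] ℤ) (α : Q) : ZMod 2 := ((B α α * (B α α + 1) / 2 : ℤ) : ZMod 2)

lemma f_key (a b c : ℤ) :
    (a + b + 2*c) * ((a + b + 2*c) + 1) / 2
      = a * (a+1) / 2 + b * (b+1) / 2 + (a*b + c) + 2*(c*c + a*c + b*c) := by
  have h1 : 2 * ((a + b + 2*c) * ((a + b + 2*c) + 1) / 2) = (a + b + 2*c) * ((a + b + 2*c) + 1) :=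
    Int.two_mul_ediv_two_of_even (Int.even_mul_succ_self _)
  have h2 : 2 * (a * (a+1) / 2) = a * (a+1) := Int.two_mul_ediv_two_of_even (Int.even_mul_succ_self _)
  have h3 : 2 * (b * (b+1) / 2) = b * (b+1) := Int.two_mul_ediv_two_of_even (Int.even_mul_succ_self _)
  have h4 : (a + b + 2*c) * ((a + b + 2*c) + 1)
      = a * (a+1) + b * (b+1) + 2*(a*b + c) + 4*(c*c + a*c + b*c) := by ring
  linarith

lemma B_add_add (B : Q →ₗ[ℤ] Q →ₗ[ℤ] ℤ) (hBsymm : ∀ α β : Q, B α β = B β α) (α β : Q) :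
    B (α + β) (α + β) = B α α + B β β + 2 * B α β := by
  simp only [map_add, LinearMap.add_apply]
  rw [hBsymm β α]; ring

/-- diagonal of B mod 2, as a linear map -/
def diag (B : Q →ₗ[ℤ] Q →ₗ[ℤ] ℤ) (hBsymm : ∀ α β : Q, B α β = B β α) : Q →ₗ[ℤ] ZMod 2 where
  toFun α := ((B α α : ℤ) : ZMod 2)
  map_add' α β := by
    show ((B (α+β) (α+β) : ℤ) : ZMod 2) = ((B α α : ℤ) : ZMod 2) + ((B β β : ℤ) : ZMod 2)
    rw [B_add_add B hBsymm]
    rw [Int.cast_add, Int.cast_add, zmod2_two_mul, add_zero]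
  map_smul' c α := by
    simp only [LinearMap.map_smul, LinearMap.smul_apply, smul_eq_mul, RingHom.id_apply,
      zsmul_eq_mul]
    push_cast
    rw [← mul_assoc, zmod2_mul_self]

/-- the bilinear correction form Φ -/
noncomputable def Phi (B : Q →ₗ[ℤ] Q →ₗ[ℤ] ℤ) (hBsymm : ∀ α β : Q, B α β = B β α) :
    Q →ₗ[ℤ] Q →ₗ[ℤ] ZMod 2 :=
  B.compr₂ (Int.castAddHom (ZMod 2)).toIntLinearMap
    + (LinearMap.mul ℤ (ZMod 2)).compl₁₂ (diag B hBsymm) (diag B hBsymm)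

lemma Phi_apply (B : Q →ₗ[ℤ] Q →ₗ[ℤ] ℤ) (hBsymm : ∀ α β : Q, B α β = B β α) (α β : Q) :
    Phi B hBsymm α β = ((B α β : ℤ) : ZMod 2) + ((B α α : ℤ) : ZMod 2) * ((B β β : ℤ) : ZMod 2) := by
  simp [Phi, diag, LinearMap.compr₂_apply, LinearMap.compl₁₂_apply, LinearMap.mul_apply']

lemma Phi_symm (B : Q →ₗ[ℤ] Q →ₗ[ℤ] ℤ) (hBsymm : ∀ α β : Q, B α β = B β α) (α β : Q) :
    Phi B hBsymm α β = Phi B hBsymm β α := by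
  rw [Phi_apply, Phi_apply, hBsymm α β]; ring

lemma Phi_self (B : Q →ₗ[ℤ] Q →ₗ[ℤ] ℤ) (hBsymm : ∀ α β : Q, B α β = B β α) (α : Q) :
    Phi B hBsymm α α = 0 := by
  rw [Phi_apply, zmod2_mul_self, show ∀ x : ZMod 2, x + x = 0 by decide]

lemma qf_add (B : Q →ₗ[ℤ] Q →ₗ[ℤ] ℤ) (hBsymm : ∀ α β : Q, B α β = B β α) (α β : Q) :
    qf B (α + β) = qf B α + qf B β + Phi B hBsymm α β := by
  unfold qf
  rw [B_add_add B hBsymm, f_key, Phi_apply]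
  rw [Int.cast_add, Int.cast_add, Int.cast_add, zmod2_two_mul, add_zero]
  push_cast
  ring

lemma qf_zero (B : Q →ₗ[ℤ] Q →ₗ[ℤ] ℤ) : qf B (0 : Q) = 0 := by
  simp [qf]

lemma qf_smul (B : Q →ₗ[ℤ] Q →ₗ[ℤ] ℤ) (hBsymm : ∀ α β : Q, B α β = B β α) (c : ℤ) (α : Q) :
    qf B (c • α) = (c : ZMod 2) * qf B α := by
  induction c using Int.induction_on with
  | zero => simp [qf_zero]
  | succ k ih =>
      have : ((k : ℤ) + 1) • α = (k : ℤ) • α + α := by rw [add_smul, one_smul]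
      rw [this, qf_add B hBsymm, ih]
      have : Phi B hBsymm ((k:ℤ) • α) α = (k : ZMod 2) * Phi B hBsymm α α := by
        rw [LinearMap.map_smul, LinearMap.smul_apply, zsmul_eq_mul]; rfl
      rw [this, Phi_self, mul_zero, add_zero]
      push_cast; ring
  | pred k ih =>
      have h : (-(k : ℤ) - 1) • α + α = (-(k:ℤ)) • α := by
        rw [sub_smul, one_smul]; abel
      have key := qf_add B hBsymm ((-(k : ℤ) - 1) • α) α
      rw [h] at key
      have hphi : Phi B hBsymm ((-(k:ℤ) - 1) • α) α = (((-(k:ℤ)-1) : ℤ) : ZMod 2) * Phi B hBsymm α α := by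
        rw [LinearMap.map_smul, LinearMap.smul_apply, zsmul_eq_mul]
      rw [hphi, Phi_self, mul_zero, add_zero, ih] at key
      push_cast at key ⊢
      linear_combination -key

end
end ExistsEpsilonAux

open ExistsEpsilonAux in
/-- On any integral lattice `Q` there exists a bimultiplicative map
`ε : Q × Q → {±1}` satisfying `ε(α,α) = (-1)^{|α|²(|α|²+1)/2}`. -/
theorem exists_epsilon
    (Q : Type*) [AddCommGroup Q] [Module.Free ℤ Q] [Module.Finite ℤ Q]
    (B : Q →ₗ[ℤ] Q →ₗ[ℤ] ℤ) (hBsymm : ∀ α β : Q, B α β = B β α) :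
    ∃ ε : Q → Q → ℤˣ,
      (∀ α α' β : Q, ε (α + α') β = ε α β * ε α' β) ∧
      (∀ α β β' : Q, ε α (β + β') = ε α β * ε α β') ∧
      (∀ α : Q, ε α α = (-1 : ℤˣ) ^ (B α α * (B α α + 1) / 2)) := by
  classical
  let n := Fintype.card (Module.Free.ChooseBasisIndex ℤ Q)
  let b : Module.Basis (Fin n) ℤ Q := (Module.Free.chooseBasis ℤ Q).reindex (Fintype.equivFin _)
  let Φ := Phi B hBsymm
  let g : Fin n → Fin n → ZMod 2 := fun i j =>
    if i < j then Φ (b i) (b j) else if i = j then qf B (b i) else 0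
  let C : Q →ₗ[ℤ] Q →ₗ[ℤ] ZMod 2 := b.constr ℤ fun i => b.constr ℤ fun j => g i j
  have hC : ∀ i j, C (b i) (b j) = g i j := by
    intro i j
    simp only [C, Module.Basis.constr_basis]
  have hflip : ∀ x y : Q, C x y + C y x = Φ x y := by
    have hCC : C + C.flip = Φ := by
      apply b.ext; intro i
      apply b.ext; intro j
      simp only [LinearMap.add_apply, LinearMap.flip_apply, hC]
      rcases lt_trichotomy i j with h | h | h
      · simp only [g, if_pos h, if_neg (not_lt.mpr h.le), if_neg h.ne', add_zero]
      · subst h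
        simp only [g, if_neg (lt_irrefl i), if_pos rfl]
        rw [show ∀ x : ZMod 2, x + x = 0 by decide, Phi_self]
      · simp only [g, if_neg (not_lt.mpr h.le), if_neg h.ne', if_pos h, zero_add]
        exact (Phi_symm B hBsymm (b i) (b j)).symm
    intro x y
    rw [← hCC]
    simp [LinearMap.add_apply, LinearMap.flip_apply]
  have hdiagb : ∀ i, C (b i) (b i) = qf B (b i) := by
    intro i
    rw [hC]
    simp [g]
  have hmain : ∀ (s : Finset (Fin n)) (r : Fin n → ℤ),
      C (∑ i ∈ s, r i • b i) (∑ i ∈ s, r i • b i) = qf B (∑ i ∈ s, r i • b i) := by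
    intro s r
    induction s using Finset.induction_on with
    | empty => simp [qf_zero]
    | @insert i s hi ih =>
        rw [Finset.sum_insert hi]
        have hCz : C (r i • b i) (r i • b i) = qf B (r i • b i) := by
          simp only [map_smul, LinearMap.smul_apply, zsmul_eq_mul]
          rw [qf_smul B hBsymm, ← mul_assoc, zmod2_mul_self, hdiagb i]
        rw [qf_add B hBsymm]
        simp only [map_add, LinearMap.add_apply]
        rw [ih, hCz]
        rw [← hflip (r i • b i) (∑ j ∈ s, r j • b j)]
        ring
  have hdiag : ∀ α : Q, C α α = qf B α := by
    intro α
    have key := hmain Finset.univ (fun i => b.repr α i)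
    rwa [b.sum_repr α] at key
  refine ⟨fun α β => u (C α β), ?_, ?_, ?_⟩
  · intro α α' β
    show u (C (α + α') β) = u (C α β) * u (C α' β)
    rw [map_add, LinearMap.add_apply, u_add]
  · intro α β β'
    show u (C α (β + β')) = u (C α β) * u (C α β')
    rw [map_add, u_add]
  · intro α
    show u (C α α) = (-1 : ℤˣ) ^ (B α α * (B α α + 1) / 2)
    rw [hdiag α, neg_one_zpow]
    rfl
end

section
/- Let ε and ε′ be two bimultiplicative maps Q × Q → {1,−1} both satisfying ε(α,α) = ε′(α,α) = (−1)^{|α|²(|α|²+1)/2} for all α ∈ Q. Then the two are equivalent: there exists a function η: Q → {1,−1} such that η(α)η(β)ε(α,β) = η(α+β)ε′(α,β) for all α, β ∈ Q. -/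
/-- Any two bimultiplicative maps `ε, ε' : Q × Q → {±1}` on an integral lattice
with the same diagonal values `(-1)^{|α|²(|α|²+1)/2}` are equivalent: there is
`η : Q → {±1}` with `η(α)η(β)ε(α,β) = η(α+β)ε'(α,β)`. -/
theorem epsilon_unique_up_to_equivalence
    (Q : Type*) [AddCommGroup Q] [Module.Free ℤ Q] [Module.Finite ℤ Q]
    (B : Q →ₗ[ℤ] Q →ₗ[ℤ] ℤ) (hBsymm : ∀ α β : Q, B α β = B β α)
    (ε ε' : Q → Q → ℤˣ)
    (hbm1 : ∀ α α' β : Q, ε (α + α') β = ε α β * ε α' β)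
    (hbm2 : ∀ α β β' : Q, ε α (β + β') = ε α β * ε α β')
    (hbm1' : ∀ α α' β : Q, ε' (α + α') β = ε' α β * ε' α' β)
    (hbm2' : ∀ α β β' : Q, ε' α (β + β') = ε' α β * ε' α β')
    (hdiag : ∀ α : Q, ε α α = (-1 : ℤˣ) ^ (B α α * (B α α + 1) / 2))
    (hdiag' : ∀ α : Q, ε' α α = (-1 : ℤˣ) ^ (B α α * (B α α + 1) / 2)) :
    ∃ η : Q → ℤˣ, ∀ α β : Q, η α * η β * ε α β = η (α + β) * ε' α β := by
  classical
  set c : Q → Q → ℤˣ := fun α β => ε α β * ε' α β with hcdef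
  have hsq : ∀ u : ℤˣ, u * u = 1 := fun u => Int.units_mul_self u
  have hc1 : ∀ α α' β : Q, c (α + α') β = c α β * c α' β := by
    intro α α' β
    simp only [hcdef, hbm1, hbm1']
    exact mul_mul_mul_comm _ _ _ _
  have hc2 : ∀ α β β' : Q, c α (β + β') = c α β * c α β' := by
    intro α β β'
    simp only [hcdef, hbm2, hbm2']
    exact mul_mul_mul_comm _ _ _ _
  have hcd : ∀ α : Q, c α α = 1 := by
    intro α
    simp only [hcdef, hdiag, hdiag', hsq]
  have hc0l : ∀ β : Q, c 0 β = 1 := by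
    intro β
    have h := hc1 0 0 β
    rw [add_zero] at h
    exact mul_left_cancel (a := c 0 β) (by rw [← h, mul_one])
  have hc0r : ∀ α : Q, c α 0 = 1 := by
    intro α
    have h := hc2 α 0 0
    rw [add_zero] at h
    exact mul_left_cancel (a := c α 0) (by rw [← h, mul_one])
  have hsymm : ∀ α β : Q, c β α = c α β := by
    intro α β
    have h : c α β * c β α = 1 := by
      have h1 := hcd (α + β)
      rw [hc1, hc2, hc2, hcd, hcd, one_mul, mul_one] at h1
      exact h1
    have h2 := hsq (c α β)
    exact mul_left_cancel (a := c α β) (by rw [h, h2])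
  -- negation and smul
  have hnegl : ∀ γ β : Q, c (-γ) β = c γ β := by
    intro γ β
    have h := hc1 γ (-γ) β
    rw [add_neg_cancel, hc0l] at h
    have h2 := hsq (c γ β)
    exact mul_left_cancel (a := c γ β) (by rw [← h, h2])
  have hnegr : ∀ α γ : Q, c α (-γ) = c α γ := by
    intro α γ
    have h := hc2 α γ (-γ)
    rw [add_neg_cancel, hc0r] at h
    have h2 := hsq (c α γ)
    exact mul_left_cancel (a := c α γ) (by rw [← h, h2])
  have hzsmull : ∀ (k : ℤ) (γ β : Q), c (k • γ) β = c γ β ^ k := by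
    intro k γ β
    induction k using Int.induction_on with
    | zero => simpa using hc0l β
    | succ m ih => rw [add_smul, one_smul, hc1, ih, zpow_add_one]
    | pred m ih => rw [sub_smul, one_smul, sub_eq_add_neg, hc1, ih, hnegl, zpow_sub_one]
                   congr 1
                   exact (inv_eq_of_mul_eq_one_right (hsq _)).symm
  have hzsmulr : ∀ (k : ℤ) (α γ : Q), c α (k • γ) = c α γ ^ k := by
    intro k α γ
    induction k using Int.induction_on with
    | zero => simpa using hc0r α
    | succ m ih => rw [add_smul, one_smul, hc2, ih, zpow_add_one]
    | pred m ih => rw [sub_smul, one_smul, sub_eq_add_neg, hc2, ih, hnegr, zpow_sub_one]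
                   congr 1
                   exact (inv_eq_of_mul_eq_one_right (hsq _)).symm
  have hsuml : ∀ {κ : Type} (s : Finset κ) (β : Q), ∀ g : κ → Q,
      c (∑ x ∈ s, g x) β = ∏ x ∈ s, c (g x) β := by
    intro κ s β g
    induction s using Finset.induction_on with
    | empty => simpa using hc0l β
    | insert _ _ h ih => rw [Finset.sum_insert h, Finset.prod_insert h, hc1, ih]
  have hsumr : ∀ {κ : Type} (s : Finset κ) (α : Q), ∀ g : κ → Q,
      c α (∑ x ∈ s, g x) = ∏ x ∈ s, c α (g x) := by
    intro κ s α g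
    induction s using Finset.induction_on with
    | empty => simpa using hc0r α
    | insert _ _ h ih => rw [Finset.sum_insert h, Finset.prod_insert h, hc2, ih]
  -- choose an ordered basis
  let n := Fintype.card (Module.Free.ChooseBasisIndex ℤ Q)
  let b : Module.Basis (Fin n) ℤ Q :=
    (Module.Free.chooseBasis ℤ Q).reindex (Fintype.equivFin _)
  have hexp : ∀ α β : Q,
      c α β = ∏ i : Fin n, ∏ j : Fin n,
        c (b i) (b j) ^ (b.repr α i * b.repr β j) := by
    intro α β
    conv_lhs => rw [← b.sum_repr α]
    rw [hsuml]
    refine Finset.prod_congr rfl fun i _ => ?_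
    rw [hzsmull]
    conv_lhs => rw [← b.sum_repr β]
    rw [hsumr]
    have h1 : ∀ j : Fin n, c (b i) ((b.repr β) j • b j) = c (b i) (b j) ^ (b.repr β j) :=
      fun j => hzsmulr _ _ _
    simp only [h1]
    rw [← Finset.prod_zpow]
    refine Finset.prod_congr rfl fun j _ => ?_
    rw [← zpow_mul, mul_comm]
  set S : Finset (Fin n × Fin n) := Finset.univ.filter (fun p => p.1 < p.2) with hS
  have hexp2 : ∀ α β : Q, c α β =
      ∏ p ∈ S, c (b p.1) (b p.2) ^
        (b.repr α p.1 * b.repr β p.2 + b.repr α p.2 * b.repr β p.1) := by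
    intro α β
    set F : Fin n × Fin n → ℤˣ :=
      fun p => c (b p.1) (b p.2) ^ (b.repr α p.1 * b.repr β p.2) with hF
    have step1 : c α β = ∏ p : Fin n × Fin n, F p := by
      rw [hexp α β, ← Finset.univ_product_univ]
      exact (Finset.prod_product' _ _ _).symm
    have step2 : (∏ p ∈ S, F p) *
        ∏ p ∈ Finset.univ.filter (fun p : Fin n × Fin n => ¬ p.1 < p.2), F p
        = ∏ p : Fin n × Fin n, F p :=
      Finset.prod_filter_mul_prod_filter_not _ _ _
    have step3 : (∏ p ∈ (Finset.univ.filter (fun p : Fin n × Fin n => ¬ p.1 < p.2)).filter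
          (fun p => p.1 = p.2), F p) *
        ∏ p ∈ (Finset.univ.filter (fun p : Fin n × Fin n => ¬ p.1 < p.2)).filter
          (fun p => ¬ p.1 = p.2), F p
        = ∏ p ∈ Finset.univ.filter (fun p : Fin n × Fin n => ¬ p.1 < p.2), F p :=
      Finset.prod_filter_mul_prod_filter_not _ _ _
    have hdiagprod : ∏ p ∈ (Finset.univ.filter (fun p : Fin n × Fin n => ¬ p.1 < p.2)).filter
          (fun p => p.1 = p.2), F p = 1 := by
      refine Finset.prod_eq_one fun p hp => ?_
      simp only [Finset.mem_filter] at hp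
      rw [hF]
      simp only
      rw [hp.2, hcd, one_zpow]
    have hgtprod : ∏ p ∈ (Finset.univ.filter (fun p : Fin n × Fin n => ¬ p.1 < p.2)).filter
          (fun p => ¬ p.1 = p.2), F p
        = ∏ p ∈ S, c (b p.1) (b p.2) ^ (b.repr α p.2 * b.repr β p.1) := by
      refine Finset.prod_nbij' (fun p => Prod.swap p) (fun p => Prod.swap p) ?_ ?_ ?_ ?_ ?_
      · intro p hp
        simp only [Finset.mem_filter, Finset.mem_univ, true_and] at hp ⊢
        rw [hS]
        simp only [Finset.mem_filter, Finset.mem_univ, true_and, Prod.fst_swap, Prod.snd_swap]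
        exact lt_of_le_of_ne (not_lt.mp hp.1) (Ne.symm hp.2)
      · intro p hp
        rw [hS] at hp
        simp only [Finset.mem_filter, Finset.mem_univ, true_and, Prod.fst_swap,
          Prod.snd_swap] at hp ⊢
        exact ⟨not_lt.mpr hp.le, fun h => absurd h.symm (ne_of_lt hp)⟩
      · intro p _; exact Prod.swap_swap p
      · intro p _; exact Prod.swap_swap p
      · intro p hp
        rw [hF]
        exact congrArg (· ^ ((b.repr α) p.1 * (b.repr β) p.2)) (hsymm (b p.2) (b p.1))
    rw [step1, ← step2, ← step3, hdiagprod, one_mul, hgtprod, ← Finset.prod_mul_distrib]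
    refine Finset.prod_congr rfl fun p _ => ?_
    rw [hF]
    simp only
    rw [← zpow_add]
  refine ⟨fun α => ∏ p ∈ S, c (b p.1) (b p.2) ^ (b.repr α p.1 * b.repr α p.2), ?_⟩
  intro α β
  have key : (∏ p ∈ S, c (b p.1) (b p.2) ^ (b.repr α p.1 * b.repr α p.2)) *
      (∏ p ∈ S, c (b p.1) (b p.2) ^ (b.repr β p.1 * b.repr β p.2)) * c α β
      = ∏ p ∈ S, c (b p.1) (b p.2) ^ (b.repr (α + β) p.1 * b.repr (α + β) p.2) := by
    rw [hexp2, ← Finset.prod_mul_distrib, ← Finset.prod_mul_distrib]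
    refine Finset.prod_congr rfl fun p _ => ?_
    rw [← zpow_add, ← zpow_add, map_add]
    congr 1
    simp only [Finsupp.coe_add, Pi.add_apply]
    ring
  have hε : ε α β = c α β * ε' α β := by
    rw [hcdef]
    simp only
    rw [mul_assoc, hsq, mul_one]
  rw [hε, ← mul_assoc, key]
end

section
/- Let σ: Q → Q be an automorphism of the lattice Q preserving the bilinear form, and let ε: Q × Q → {1,−1} be bimultiplicative with ε(α,α) = (−1)^{|α|²(|α|²+1)/2} for all α ∈ Q. Then there exists a function η: Q → {1,−1} such that η(α)η(β)ε(α,β) = η(α+β)ε(σα,σβ) for all α, β ∈ Q, and moreover η can be chosen so that η(α) = 1 for every α ∈ Q with σα = α. -/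
private lemma zmod2_cases (x : ZMod 2) : x = 0 ∨ x = 1 := by revert x; decide

private lemma zmod2_eq_of_add_eq_zero : ∀ {a b : ZMod 2}, a + b = 0 → a = b := by decide

private lemma zmod2_neg (a : ZMod 2) : -a = a := by revert a; decide

section GenLemmas

variable {M : Type*} [AddCommGroup M] {g : M → M → ZMod 2}

private lemma g_zero_left (h1 : ∀ x x' y : M, g (x + x') y = g x y + g x' y)
    (y : M) : g 0 y = 0 := by
  have h := h1 0 0 y
  rw [add_zero] at h
  rcases zmod2_cases (g 0 y) with h' | h'
  · exact h'
  · rw [h'] at h; exact absurd h (by decide)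

private lemma g_zero_right (h2 : ∀ x y y' : M, g x (y + y') = g x y + g x y')
    (x : M) : g x 0 = 0 := by
  have h := h2 x 0 0
  rw [add_zero] at h
  rcases zmod2_cases (g x 0) with h' | h'
  · exact h'
  · rw [h'] at h; exact absurd h (by decide)

private lemma g_symm (h1 : ∀ x x' y : M, g (x + x') y = g x y + g x' y)
    (h2 : ∀ x y y' : M, g x (y + y') = g x y + g x y')
    (hd : ∀ x : M, g x x = 0) (x y : M) : g x y = g y x := by
  have h := hd (x + y)
  rw [h1, h2, h2, hd, hd, zero_add, add_zero] at h
  exact zmod2_eq_of_add_eq_zero h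

private lemma g_neg_left (h1 : ∀ x x' y : M, g (x + x') y = g x y + g x' y)
    (x y : M) : g (-x) y = g x y := by
  have h := h1 x (-x) y
  rw [add_neg_cancel, g_zero_left h1] at h
  exact (zmod2_eq_of_add_eq_zero h.symm).symm

end GenLemmas

set_option maxRecDepth 8000 in
/-- Core construction: on `Fin n → ℤ`, any biadditive alternating form into `ZMod 2`
admits a quadratic refinement. -/
private lemma core_aux (n : ℕ) :
    ∀ (g : (Fin n → ℤ) → (Fin n → ℤ) → ZMod 2),
    (∀ x x' y, g (x + x') y = g x y + g x' y) →
    (∀ x y y', g x (y + y') = g x y + g x y') →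
    (∀ x, g x x = 0) →
    ∃ q : (Fin n → ℤ) → ZMod 2, q 0 = 0 ∧ ∀ x y, q (x + y) = q x + q y + g x y := by
  induction n with
  | zero =>
      intro g h1 h2 hd
      refine ⟨fun _ => 0, rfl, fun x y => ?_⟩
      have hx : y = x := Subsingleton.elim _ _
      rw [hx, hd]
      simp
  | succ n ih =>
      intro g h1 h2 hd
      have gz : ∀ y, g 0 y = 0 := g_zero_left h1
      have gsym := g_symm h1 h2 hd
      set L : (Fin n → ℤ) → (Fin (n + 1) → ℤ) := fun x => Fin.cons 0 x with hL
      have hLadd : ∀ x y, L (x + y) = L x + L y := by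
        intro x y
        funext i
        refine Fin.cases ?_ (fun j => ?_) i <;> simp [hL]
      obtain ⟨q', hq'0, hq'⟩ := ih (fun x y => g (L x) (L y))
        (fun x x' y => by
          show g (L (x + x')) (L y) = g (L x) (L y) + g (L x') (L y)
          rw [hLadd, h1])
        (fun x y y' => by
          show g (L x) (L (y + y')) = g (L x) (L y) + g (L x) (L y')
          rw [hLadd, h2])
        (fun x => hd _)
      set δ : Fin (n + 1) → ℤ := Fin.cons 1 0 with hδ
      have hcons0 : (Fin.cons (0 : ℤ) (0 : Fin n → ℤ)) = (0 : Fin (n + 1) → ℤ) := by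
        funext i
        refine Fin.cases ?_ (fun j => ?_) i <;> simp
      have hconsadd : ∀ k l : ℤ,
          (Fin.cons (k + l) (0 : Fin n → ℤ) : Fin (n + 1) → ℤ) =
            (Fin.cons k (0 : Fin n → ℤ) : Fin (n + 1) → ℤ)
              + (Fin.cons l (0 : Fin n → ℤ) : Fin (n + 1) → ℤ) := by
        intro k l
        funext i
        refine Fin.cases ?_ (fun j => ?_) i <;> simp
      have hconsneg : ∀ k : ℤ,
          (Fin.cons (-k) (0 : Fin n → ℤ) : Fin (n + 1) → ℤ) =
            -(Fin.cons k (0 : Fin n → ℤ) : Fin (n + 1) → ℤ) := by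
        intro k
        funext i
        refine Fin.cases ?_ (fun j => ?_) i <;> simp
      have hCL : ∀ (k : ℤ) (w : Fin (n + 1) → ℤ),
          g (Fin.cons k (0 : Fin n → ℤ) : Fin (n + 1) → ℤ) w = (k : ZMod 2) * g δ w := by
        intro k w
        induction k using Int.induction_on with
        | zero => rw [hcons0, gz]; push_cast; ring
        | succ i ihk =>
            rw [hconsadd, h1, ihk, ← hδ]
            push_cast
            ring
        | pred i ihk =>
            rw [show (-(i : ℤ) - 1) = (-(i : ℤ)) + (-1) from by ring, hconsadd, h1, ihk,
              hconsneg, g_neg_left h1, ← hδ]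
            push_cast
            simp only [zmod2_neg, sub_eq_add_neg]
            ring
      have hCR : ∀ (k : ℤ) (w : Fin (n + 1) → ℤ),
          g w (Fin.cons k (0 : Fin n → ℤ) : Fin (n + 1) → ℤ) = (k : ZMod 2) * g w δ := by
        intro k w
        rw [gsym, hCL, gsym δ w]
      have hdec : ∀ z : Fin (n + 1) → ℤ,
          z = (Fin.cons (z 0) (0 : Fin n → ℤ) : Fin (n + 1) → ℤ) + L (Fin.tail z) := by
        intro z
        funext i
        refine Fin.cases ?_ (fun j => ?_) i <;> simp [hL, Fin.tail]
      have htail : ∀ y z : Fin (n + 1) → ℤ, Fin.tail (y + z) = Fin.tail y + Fin.tail z :=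
        fun y z => rfl
      set qq : (Fin (n + 1) → ℤ) → ZMod 2 :=
        fun z => q' (Fin.tail z) + (z 0 : ZMod 2) * g δ (L (Fin.tail z)) with hqq
      refine ⟨qq, ?_, ?_⟩
      · simp only [hqq]
        rw [show Fin.tail (0 : Fin (n + 1) → ℤ) = 0 from rfl, hq'0,
          show ((0 : Fin (n + 1) → ℤ) 0) = 0 from rfl]
        push_cast
        ring
      · intro y z
        have expand : g y z = (y 0 : ZMod 2) * g δ (L (Fin.tail z))
            + (z 0 : ZMod 2) * g δ (L (Fin.tail y)) + g (L (Fin.tail y)) (L (Fin.tail z)) := by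
          conv_lhs => rw [hdec y, hdec z]
          rw [h1, h2, h2,
            hCL (y 0) (Fin.cons (z 0) (0 : Fin n → ℤ) : Fin (n + 1) → ℤ),
            hCL (y 0) (L (Fin.tail z)),
            hCR (z 0) δ,
            hCR (z 0) (L (Fin.tail y)),
            hd δ, gsym (L (Fin.tail y)) δ]
          ring
        simp only [hqq]
        rw [htail, hq', hLadd, h2, show (y + z) 0 = y 0 + z 0 from rfl, expand]
        push_cast
        ring

/-- Version for an arbitrary finite free `ℤ`-module. -/
private lemma core (M : Type*) [AddCommGroup M] [Module ℤ M] [Module.Free ℤ M]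
    [Module.Finite ℤ M] (g : M → M → ZMod 2)
    (h1 : ∀ x x' y, g (x + x') y = g x y + g x' y)
    (h2 : ∀ x y y', g x (y + y') = g x y + g x y')
    (hd : ∀ x, g x x = 0) :
    ∃ q : M → ZMod 2, q 0 = 0 ∧ ∀ x y, q (x + y) = q x + q y + g x y := by
  classical
  let b := Module.Free.chooseBasis ℤ M
  let n := Fintype.card (Module.Free.ChooseBasisIndex ℤ M)
  let e : M ≃ₗ[ℤ] (Fin n → ℤ) := (b.reindex (Fintype.equivFin _)).equivFun
  obtain ⟨q₀, hq₀0, hq₀⟩ := core_aux n (fun u v => g (e.symm u) (e.symm v))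
    (fun u u' v => by
      show g (e.symm (u + u')) (e.symm v) = _
      rw [map_add, h1])
    (fun u v v' => by
      show g (e.symm u) (e.symm (v + v')) = _
      rw [map_add, h2])
    (fun u => hd _)
  refine ⟨fun x => q₀ (e x), ?_, fun x y => ?_⟩
  · show q₀ (e 0) = 0
    rw [map_zero, hq₀0]
  · show q₀ (e (x + y)) = q₀ (e x) + q₀ (e y) + g x y
    rw [map_add, hq₀, e.symm_apply_apply, e.symm_apply_apply]

private def chi (u : ℤˣ) : ZMod 2 := if u = 1 then 0 else 1

private lemma chi_mul (u v : ℤˣ) : chi (u * v) = chi u + chi v := by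
  rcases Int.units_eq_one_or u with hu | hu <;> rcases Int.units_eq_one_or v with hv | hv <;>
    subst hu <;> subst hv <;> decide

private lemma chi_eq_zero_iff (u : ℤˣ) : chi u = 0 ↔ u = 1 := by
  rcases Int.units_eq_one_or u with hu | hu <;> subst hu <;> decide

/-- If `σ` is an automorphism of the integral lattice `Q` preserving the form,
and `ε` is bimultiplicative with the standard diagonal values, then there is
`η : Q → {±1}` with `η(α)η(β)ε(α,β) = η(α+β)ε(σα,σβ)`, which moreover can be chosen so that
`η(α) = 1` whenever `σα = α`. -/
theorem exists_eta_for_automorphism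
    (Q : Type*) [AddCommGroup Q] [Module.Free ℤ Q] [Module.Finite ℤ Q]
    (B : Q →ₗ[ℤ] Q →ₗ[ℤ] ℤ) (hBsymm : ∀ α β : Q, B α β = B β α)
    (σ : Q ≃ₗ[ℤ] Q) (hσB : ∀ α β : Q, B (σ α) (σ β) = B α β)
    (ε : Q → Q → ℤˣ)
    (hbm1 : ∀ α α' β : Q, ε (α + α') β = ε α β * ε α' β)
    (hbm2 : ∀ α β β' : Q, ε α (β + β') = ε α β * ε α β')
    (hdiag : ∀ α : Q, ε α α = (-1 : ℤˣ) ^ (B α α * (B α α + 1) / 2)) :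
    ∃ η : Q → ℤˣ,
      (∀ α β : Q, η α * η β * ε α β = η (α + β) * ε (σ α) (σ β)) ∧
      (∀ α : Q, σ α = α → η α = 1) := by
  classical
  -- the twisted form f and its mod-2 version g
  set f : Q → Q → ℤˣ := fun α β => ε α β * ε (σ α) (σ β) with hf
  set g : Q → Q → ZMod 2 := fun α β => chi (f α β) with hg
  have hfadd1 : ∀ α α' β, f (α + α') β = f α β * f α' β := by
    intro α α' β
    simp only [hf, map_add, hbm1]
    exact mul_mul_mul_comm _ _ _ _
  have hfadd2 : ∀ α β β', f α (β + β') = f α β * f α β' := by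
    intro α β β'
    simp only [hf, map_add, hbm2]
    exact mul_mul_mul_comm _ _ _ _
  have hfdiag : ∀ α, f α α = 1 := by
    intro α
    simp only [hf, hdiag, hσB]
    exact Int.units_mul_self _
  have hffix : ∀ α β, σ α = α → σ β = β → f α β = 1 := by
    intro α β hα hβ
    simp only [hf, hα, hβ]
    exact Int.units_mul_self _
  have h1 : ∀ α α' β, g (α + α') β = g α β + g α' β := by
    intro α α' β; simp only [hg, hfadd1, chi_mul]
  have h2 : ∀ α β β', g α (β + β') = g α β + g α β' := by
    intro α β β'; simp only [hg, hfadd2, chi_mul]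
  have hd : ∀ α, g α α = 0 := by
    intro α; simp only [hg, hfdiag]; decide
  have hgfix : ∀ α β, σ α = α → σ β = β → g α β = 0 := by
    intro α β hα hβ; simp only [hg, hffix α β hα hβ]; decide
  -- the fixed submodule S and the splitting of Q → Q/S
  set S : Submodule ℤ Q := LinearMap.ker (σ.toLinearMap - LinearMap.id) with hS
  have hmemS : ∀ α : Q, α ∈ S ↔ σ α = α := by
    intro α
    simp [hS, LinearMap.mem_ker, sub_eq_zero]
  haveI : NoZeroSMulDivisors ℤ (Q ⧸ S) := by
    refine ⟨fun {c} {x} h => ?_⟩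
    by_cases hc : c = 0
    · exact Or.inl hc
    obtain ⟨a, rfl⟩ := Submodule.Quotient.mk_surjective S x
    right
    rw [← Submodule.Quotient.mk_smul, Submodule.Quotient.mk_eq_zero] at h
    rw [Submodule.Quotient.mk_eq_zero, hmemS]
    rw [hmemS] at h
    rw [map_smul] at h
    have : c • (σ a - a) = 0 := by rw [smul_sub, h, sub_self]
    exact sub_eq_zero.mp ((smul_eq_zero.mp this).resolve_left hc)
  haveI : Module.Free ℤ (Q ⧸ S) := Module.free_of_finite_type_torsion_free'
  obtain ⟨ρ, hρ⟩ := Module.projective_lifting_property S.mkQ (LinearMap.id) S.mkQ_surjective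
  have hρ' : ∀ x : Q ⧸ S, S.mkQ (ρ x) = x := fun x => by
    simpa using DFunLike.congr_fun hρ x
  obtain ⟨q', hq'0, hq'⟩ := core (Q ⧸ S) (fun x y => g (ρ x) (ρ y))
    (fun x x' y => by
      show g (ρ (x + x')) (ρ y) = _
      rw [map_add, h1])
    (fun x y y' => by
      show g (ρ x) (ρ (y + y')) = _
      rw [map_add, h2])
    (fun x => hd _)
  -- the quadratic function q on Q
  set q : Q → ZMod 2 :=
    fun α => q' (S.mkQ α) + g (α - ρ (S.mkQ α)) (ρ (S.mkQ α)) with hq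
  have hsfix : ∀ α : Q, σ (α - ρ (S.mkQ α)) = α - ρ (S.mkQ α) := by
    intro α
    rw [← hmemS]
    have h0 : S.mkQ (α - ρ (S.mkQ α)) = 0 := by rw [map_sub, hρ', sub_self]
    rwa [Submodule.mkQ_apply, Submodule.Quotient.mk_eq_zero] at h0
  have hqcoc : ∀ α β : Q, q (α + β) = q α + q β + g α β := by
    intro α β
    have hmk : S.mkQ (α + β) = S.mkQ α + S.mkQ β := map_add _ _ _
    have hrmk : ρ (S.mkQ (α + β)) = ρ (S.mkQ α) + ρ (S.mkQ β) := by rw [hmk, map_add]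
    have hsplit : α + β - ρ (S.mkQ (α + β)) =
        (α - ρ (S.mkQ α)) + (β - ρ (S.mkQ β)) := by rw [hrmk]; abel
    have expand : g α β =
        g (α - ρ (S.mkQ α)) (β - ρ (S.mkQ β))
          + g (α - ρ (S.mkQ α)) (ρ (S.mkQ β))
          + g (β - ρ (S.mkQ β)) (ρ (S.mkQ α))
          + g (ρ (S.mkQ α)) (ρ (S.mkQ β)) := by
      conv_lhs => rw [show α = (α - ρ (S.mkQ α)) + ρ (S.mkQ α) by abel,
        show β = (β - ρ (S.mkQ β)) + ρ (S.mkQ β) by abel]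
      rw [h1, h2, h2, g_symm h1 h2 hd (ρ (S.mkQ α)) (β - ρ (S.mkQ β))]
      ring
    have hzero : g (α - ρ (S.mkQ α)) (β - ρ (S.mkQ β)) = 0 :=
      hgfix _ _ (hsfix α) (hsfix β)
    calc q (α + β)
        = q' (S.mkQ α + S.mkQ β)
            + g ((α - ρ (S.mkQ α)) + (β - ρ (S.mkQ β))) (ρ (S.mkQ α) + ρ (S.mkQ β)) := by
          simp only [hq]; rw [hsplit, hrmk, hmk]
      _ = q' (S.mkQ α) + q' (S.mkQ β) + g (ρ (S.mkQ α)) (ρ (S.mkQ β))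
            + (g (α - ρ (S.mkQ α)) (ρ (S.mkQ α)) + g (α - ρ (S.mkQ α)) (ρ (S.mkQ β))
              + g (β - ρ (S.mkQ β)) (ρ (S.mkQ α)) + g (β - ρ (S.mkQ β)) (ρ (S.mkQ β))) := by
          rw [hq', h1, h2, h2]; ring
      _ = q α + q β + g α β := by
          simp only [hq]; rw [expand, hzero]; ring
  have hqfix : ∀ α : Q, σ α = α → q α = 0 := by
    intro α hα
    have hmk : S.mkQ α = 0 := by
      rw [Submodule.mkQ_apply, Submodule.Quotient.mk_eq_zero, hmemS]; exact hα
    simp only [hq]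
    rw [hmk, map_zero, hq'0, g_zero_right h2, add_zero]
  -- define η and conclude
  set η : Q → ℤˣ := fun α => if q α = 0 then 1 else -1 with hη
  have hηval : ∀ α, (q α = 0 ∧ η α = 1) ∨ (q α = 1 ∧ η α = -1) := by
    intro α
    rcases zmod2_cases (q α) with h | h
    · exact Or.inl ⟨h, by simp only [hη]; simp [h]⟩
    · exact Or.inr ⟨h, by simp only [hη]; simp [h]⟩
  refine ⟨η, fun α β => ?_, fun α hα => ?_⟩
  · have hfval : (g α β = 0 ∧ f α β = 1) ∨ (g α β = 1 ∧ f α β = -1) := by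
      rcases Int.units_eq_one_or (f α β) with h | h
      · exact Or.inl ⟨by simp only [hg]; rw [chi_eq_zero_iff]; exact h, h⟩
      · refine Or.inr ⟨?_, h⟩
        rcases zmod2_cases (g α β) with h' | h'
        · simp only [hg] at h'
          rw [chi_eq_zero_iff] at h'
          rw [h'] at h
          exact absurd h (by decide)
        · exact h'
    have hcoc := hqcoc α β
    have key : η α * η β * f α β = η (α + β) := by
      rcases hfval with ⟨hg', hf'⟩ | ⟨hg', hf'⟩ <;>
      rcases hηval α with ⟨ha, ha'⟩ | ⟨ha, ha'⟩ <;>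
      rcases hηval β with ⟨hb, hb'⟩ | ⟨hb, hb'⟩ <;>
      rcases hηval (α + β) with ⟨hc, hc'⟩ | ⟨hc, hc'⟩ <;>
      rw [ha, hb, hg', hc] at hcoc <;>
      rw [ha', hb', hf', hc'] <;>
      first
        | decide
        | exact absurd hcoc (by decide)
    have hε : ε α β = f α β * ε (σ α) (σ β) := by
      simp only [hf]
      rw [mul_assoc, Int.units_mul_self, mul_one]
    rw [hε, ← mul_assoc, key]
  · rcases hηval α with ⟨h, h'⟩ | ⟨h, h'⟩
    · exact h'
    · rw [hqfix α hα] at h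
      exact absurd h (by decide)
end

section
/- For every α ∈ h, one has ∑_{j=0}^{N−1} (j/N) (π_j α | α) = ((α|α) − (π_0 α | π_0 α))/2; that is, the left-hand side equals −b_α, where b_α = (|α_0|² − |α|²)/2 and α_0 = π_0 α. -/
/-- For every `α ∈ h`,
`∑_{j=0}^{N-1} (j/N) (π_j α | α) = ((α|α) - (π_0 α | π_0 α))/2 = -b_α`. -/
theorem proj_pairing_sum
    (h : Type*) [AddCommGroup h] [Module ℂ h] [FiniteDimensional ℂ h]
    (B : h →ₗ[ℂ] h →ₗ[ℂ] ℂ) (hBsymm : ∀ x y : h, B x y = B y x)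
    (hBnd : ∀ x : h, (∀ y : h, B x y = 0) → x = 0)
    (N : ℕ) (hN : 0 < N)
    (σ : Module.End ℂ h) (hσN : σ ^ N = 1)
    (hσB : ∀ x y : h, B (σ x) (σ y) = B x y)
    (ε : ℂ) (hε : ε = Complex.exp (2 * Real.pi * Complex.I / N))
    (proj : ℕ → Module.End ℂ h)
    (hproj : ∀ j : ℕ,
      proj j = (N : ℂ)⁻¹ • ∑ k ∈ Finset.range N, ε ^ (k * j) • σ ^ k)
    (α : h) :
    ∑ j ∈ Finset.range N, ((j : ℂ) / (N : ℂ)) * B (proj j α) α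
      = (B α α - B (proj 0 α) (proj 0 α)) / 2 := by
  have hNC : (N : ℂ) ≠ 0 := Nat.cast_ne_zero.mpr hN.ne'
  have hprim : IsPrimitiveRoot ε N := by
    rw [hε]; exact Complex.isPrimitiveRoot_exp N hN.ne'
  have hεN : ε ^ N = 1 := hprim.pow_eq_one
  have hε0 : ε ≠ 0 := by
    intro h0
    rw [h0, zero_pow hN.ne'] at hεN
    exact zero_ne_one hεN
  -- iterated invariance
  have hσBm : ∀ (m : ℕ) (x y : h), B ((σ ^ m) x) ((σ ^ m) y) = B x y := by
    intro m
    induction m with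
    | zero => intro x y; simp
    | succ m ih =>
      intro x y
      have e : ∀ z : h, (σ ^ (m + 1)) z = (σ ^ m) (σ z) := by
        intro z; rw [pow_succ, Module.End.mul_apply]
      rw [e, e, ih, hσB]
  set b : ℕ → ℂ := fun k => B ((σ ^ k) α) α with hbdef
  -- reflection of b
  have hb : ∀ k ≤ N, b (N - k) = b k := by
    intro k hk
    have h1 := hσBm k ((σ ^ (N - k)) α) α
    have h2 : (σ ^ k) ((σ ^ (N - k)) α) = α := by
      have hmul : σ ^ k * σ ^ (N - k) = 1 := by
        rw [← pow_add, Nat.add_sub_cancel' hk, hσN]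
      calc (σ ^ k) ((σ ^ (N - k)) α) = (σ ^ k * σ ^ (N - k)) α := rfl
        _ = α := by rw [hmul]; rfl
    rw [h2] at h1
    rw [hbdef]
    simp only
    rw [← h1, hBsymm]
  have hbN : b N = b 0 := by simp only [hbdef, hσN, pow_zero]
  set C : ℕ → ℂ := fun j => ∑ k ∈ Finset.range N, ε ^ (k * j) * b k with hCdef
  -- B (proj j α) α = N⁻¹ * C j
  have hc : ∀ j, B (proj j α) α = (N : ℂ)⁻¹ * C j := by
    intro j
    rw [hproj j]
    simp only [LinearMap.smul_apply, LinearMap.coe_sum, Finset.sum_apply, map_smul,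
      map_sum, smul_eq_mul, hCdef, hbdef, Finset.mul_sum, LinearMap.map_smul₂, LinearMap.sum_apply]
  -- shift lemma
  have hshift : ∀ g : ℕ → ℂ, ∑ k ∈ Finset.range N, g (k + 1)
      = ∑ k ∈ Finset.range N, g k + g N - g 0 := by
    intro g
    have h1 := Finset.sum_range_succ' g N
    have h2 := Finset.sum_range_succ g N
    rw [h2] at h1
    linear_combination -h1
  -- reflection of C
  have hCrefl : ∀ j ≤ N, C j = C (N - j) := by
    intro j hj
    have step : ∀ k ∈ Finset.range N,
        ε ^ ((N - 1 - k) * j) * b (N - 1 - k) = ε ^ ((k + 1) * (N - j)) * b (k + 1) := by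
      intro k hk
      have hk' : k + 1 ≤ N := Finset.mem_range.mp hk
      have hrw : N - 1 - k = N - (k + 1) := by omega
      have hbrw : b (N - (k + 1)) = b (k + 1) := hb (k + 1) hk'
      have hpow : ε ^ ((N - (k + 1)) * j) = ε ^ ((k + 1) * (N - j)) := by
        have hz : ε ^ ((k + 1) * j) ≠ 0 := pow_ne_zero _ hε0
        apply mul_right_cancel₀ hz
        rw [← pow_add, ← pow_add]
        have e1 : (N - (k + 1)) * j + (k + 1) * j = N * j := by
          rw [← Nat.add_mul, Nat.sub_add_cancel hk']
        have e2 : (k + 1) * (N - j) + (k + 1) * j = N * (k + 1) := by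
          rw [← Nat.mul_add, Nat.sub_add_cancel hj, Nat.mul_comm]
        rw [e1, e2, pow_mul, pow_mul, hεN, one_pow, one_pow]
      rw [hrw, hbrw, hpow]
    calc C j = ∑ k ∈ Finset.range N, ε ^ ((N - 1 - k) * j) * b (N - 1 - k) :=
          (Finset.sum_range_reflect (fun k => ε ^ (k * j) * b k) N).symm
      _ = ∑ k ∈ Finset.range N, ε ^ ((k + 1) * (N - j)) * b (k + 1) :=
          Finset.sum_congr rfl step
      _ = C (N - j) := by
          rw [hshift (fun k => ε ^ (k * (N - j)) * b k)]
          simp only [hCdef, hbN, pow_mul, hεN, one_pow, Nat.zero_mul, pow_zero, one_mul]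
          ring
  -- total sum of C
  have hT : ∑ j ∈ Finset.range N, C j = N * b 0 := by
    rw [hCdef]
    simp only
    rw [Finset.sum_comm]
    have hrow : ∀ k ∈ Finset.range N,
        ∑ j ∈ Finset.range N, ε ^ (k * j) * b k = if k = 0 then (N : ℂ) * b 0 else 0 := by
      intro k hk
      rcases Nat.eq_zero_or_pos k with h0 | hkpos
      · subst h0; simp
      · have hne : ε ^ k ≠ 1 :=
          hprim.pow_ne_one_of_pos_of_lt hkpos.ne' (Finset.mem_range.mp hk)
        have hx : (ε ^ k) ^ N = 1 := by
          rw [← pow_mul, mul_comm, pow_mul, hεN, one_pow]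
        have hz : ∑ j ∈ Finset.range N, ε ^ (k * j) = 0 := by
          calc ∑ j ∈ Finset.range N, ε ^ (k * j)
              = ∑ j ∈ Finset.range N, (ε ^ k) ^ j :=
                Finset.sum_congr rfl fun j _ => by rw [← pow_mul]
            _ = ((ε ^ k) ^ N - 1) / (ε ^ k - 1) := geom_sum_eq hne N
            _ = 0 := by rw [hx]; simp
        rw [← Finset.sum_mul, hz, zero_mul, if_neg hkpos.ne']
    rw [Finset.sum_congr rfl hrow,
      Finset.sum_ite_eq' (Finset.range N) 0 (fun _ => (N : ℂ) * b 0)]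
    simp [Finset.mem_range.mpr hN]
  -- key pairing identity
  have key : (∑ j ∈ Finset.range N, ((j : ℂ) / N) * C j)
      + (∑ j ∈ Finset.range N, ((j : ℂ) / N) * C j)
      = ∑ j ∈ Finset.range N, C j - C 0 := by
    set G : ℕ → ℂ := fun m => (((N : ℂ) - (m : ℂ)) / N) * C m with hGdef
    have refl1 : ∑ j ∈ Finset.range N, ((j : ℂ) / N) * C j
        = ∑ j ∈ Finset.range N, G (j + 1) := by
      rw [← Finset.sum_range_reflect (fun j => ((j : ℂ) / N) * C j) N]
      refine Finset.sum_congr rfl fun j hj => ?_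
      have hj' : j < N := Finset.mem_range.mp hj
      have hcast : ((N - 1 - j : ℕ) : ℂ) = (N : ℂ) - ((j + 1 : ℕ) : ℂ) := by
        have e : (N - 1 - j : ℕ) = N - (j + 1) := by omega
        rw [e, Nat.cast_sub hj']
      have hCeq : C (N - 1 - j) = C (j + 1) := by
        have e : (N - 1 - j : ℕ) = N - (j + 1) := by omega
        rw [e, ← hCrefl (j + 1) hj']
      simp only [hGdef]
      rw [hcast, hCeq]
    have hGN : G N = 0 := by simp [hGdef]
    have hG0 : G 0 = C 0 := by
      simp only [hGdef, Nat.cast_zero, sub_zero]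
      rw [div_self hNC, one_mul]
    have combine : ∑ j ∈ Finset.range N, (((j : ℂ) / N) * C j + G j)
        = ∑ j ∈ Finset.range N, C j := by
      refine Finset.sum_congr rfl fun j _ => ?_
      simp only [hGdef]
      field_simp
      ring
    nth_rewrite 2 [refl1]
    rw [hshift G, hGN, hG0, ← combine, Finset.sum_add_distrib]
    ring
  -- proj 0 is σ-fixed
  have hfix : ∀ m : ℕ, σ ^ m * proj 0 = proj 0 := by
    have h1 : σ * proj 0 = proj 0 := by
      rw [hproj 0]
      simp only [Nat.mul_zero, pow_zero, one_smul]
      rw [mul_smul_comm, Finset.mul_sum]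
      congr 1
      have e : ∀ k, σ * σ ^ k = σ ^ (k + 1) := fun k => (pow_succ' σ k).symm
      rw [Finset.sum_congr rfl fun k _ => e k]
      have h1 := Finset.sum_range_succ' (fun k => σ ^ k) N
      have h2 := Finset.sum_range_succ (fun k => σ ^ k) N
      rw [h2] at h1
      simp only [pow_zero, hσN] at h1
      exact (add_right_cancel h1).symm
    intro m
    induction m with
    | zero => simp
    | succ m ih => rw [pow_succ, mul_assoc, h1, ih]
  have hP0 : B (proj 0 α) (proj 0 α) = B (proj 0 α) α := by
    have hfix' : ∀ m : ℕ, (σ ^ m) ((proj 0) α) = (proj 0) α := by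
      intro m
      have := congrArg (fun T : Module.End ℂ h => T α) (hfix m)
      simpa [Module.End.mul_apply] using this
    have hterm : ∀ k ∈ Finset.range N, B ((proj 0) α) ((σ ^ k) α) = B ((proj 0) α) α := by
      intro k hk
      have hk' : k ≤ N := (Finset.mem_range.mp hk).le
      have h1 := hσBm (N - k) ((proj 0) α) ((σ ^ k) α)
      have h2 : (σ ^ (N - k)) ((σ ^ k) α) = α := by
        have hmul : σ ^ (N - k) * σ ^ k = 1 := by
          rw [← pow_add, Nat.sub_add_cancel hk', hσN]
        calc (σ ^ (N - k)) ((σ ^ k) α) = (σ ^ (N - k) * σ ^ k) α := rfl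
          _ = α := by rw [hmul]; rfl
      rw [hfix' (N - k), h2] at h1
      exact h1.symm
    have expand : ∀ x : h, B x ((proj 0) α)
        = (N : ℂ)⁻¹ * ∑ k ∈ Finset.range N, B x ((σ ^ k) α) := by
      intro x
      rw [hproj 0]
      simp only [Nat.mul_zero, pow_zero, one_smul, LinearMap.smul_apply, LinearMap.coe_sum,
        Finset.sum_apply, map_smul, map_sum, smul_eq_mul]
    rw [expand, Finset.sum_congr rfl hterm, Finset.sum_const, Finset.card_range, nsmul_eq_mul]
    field_simp
  have hb0 : b 0 = B α α := by simp [hbdef]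
  calc ∑ j ∈ Finset.range N, ((j : ℂ) / N) * B ((proj j) α) α
      = ∑ j ∈ Finset.range N, ((j : ℂ) / N) * ((N : ℂ)⁻¹ * C j) :=
        Finset.sum_congr rfl fun j _ => by rw [hc j]
    _ = (N : ℂ)⁻¹ * ∑ j ∈ Finset.range N, ((j : ℂ) / N) * C j := by
        rw [Finset.mul_sum]
        exact Finset.sum_congr rfl fun j _ => by ring
    _ = (N : ℂ)⁻¹ * ((∑ j ∈ Finset.range N, C j - C 0) / 2) := by
        rw [← key]; ring
    _ = (N : ℂ)⁻¹ * (((N : ℂ) * b 0 - C 0) / 2) := by rw [hT]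
    _ = (b 0 - (N : ℂ)⁻¹ * C 0) / 2 := by field_simp
    _ = (B α α - B ((proj 0) α) ((proj 0) α)) / 2 := by
        rw [hb0, ← hc 0, ← hP0]
end

section
/- Let σ: Q → Q be an automorphism of the lattice Q preserving the bilinear form with σ^N = id, let ε_N = e^{2πi/N}, let ε: Q × Q → {1,−1} be bimultiplicative with ε(α,α) = (−1)^{|α|²(|α|²+1)/2} for all α ∈ Q, and for α, β ∈ Q set B_{α,β} = N^{−(α|β)} ∏_{k=1}^{N−1} (1 − ε_N^k)^{(σ^k α|β)} ∈ ℂ^×. Then for all α, β ∈ Q: (ε(α,β) B_{α,β}^{−1}) · (ε(β,α) B_{β,α}^{−1})^{−1} = (−1)^{|α|²|β|²} ∏_{k=0}^{N−1} (−ε_N^k)^{−(σ^k α|β)}. -/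
private lemma aux_parC (m n : ℤ) (h : Even (m - n)) : (-1:ℂ)^m = (-1:ℂ)^n := by
  obtain ⟨t, ht⟩ := h
  have hm : m = n + (t + t) := by omega
  rw [hm, zpow_add₀ (by norm_num : (-1:ℂ) ≠ 0), Even.neg_one_zpow ⟨t, rfl⟩, mul_one]

private lemma aux_par' : ∀ m n : ℤ, Even (m - n) → (-1:ℤˣ)^m = (-1:ℤˣ)^n := by
  rintro m n ⟨t, ht⟩
  have hm : m = n + (t + t) := by omega
  rw [hm, zpow_add, Even.neg_one_zpow ⟨t, rfl⟩, mul_one]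

private lemma aux_sign' (a b c d : ℤ) (hd : d = a + b + 2*c) :
    (-1:ℤˣ)^(d*(d+1)/2) = (-1:ℤˣ)^(a*(a+1)/2) * (-1:ℤˣ)^(b*(b+1)/2) * (-1:ℤˣ)^(c + a*b) := by
  obtain ⟨p, hp⟩ := Int.even_mul_succ_self a
  obtain ⟨q, hq⟩ := Int.even_mul_succ_self b
  have half : ∀ x y : ℤ, x = y + y → x / 2 = y := by intro x y h; omega
  have e1 : a*(a+1)/2 = p := half _ _ hp
  have e2 : b*(b+1)/2 = q := half _ _ hq
  have e3 : d*(d+1)/2 = p + q + (c + a*b) + 2*(c*c + a*c + b*c) := by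
    apply half; subst hd; linear_combination hp + hq
  rw [e1, e2, e3, ← zpow_add, ← zpow_add]
  exact aux_par' _ _ ⟨c*c + a*c + b*c, by ring⟩

/-- With `B_{α,β} = N^{-(α|β)} ∏_{k=1}^{N-1} (1-ε_N^k)^{(σ^k α|β)}`, one has
`(ε(α,β) B_{α,β}⁻¹) (ε(β,α) B_{β,α}⁻¹)⁻¹ = (-1)^{|α|²|β|²} ∏_{k=0}^{N-1} (-ε_N^k)^{-(σ^k α|β)}`. -/
theorem commutator_C_formula
    (Q : Type*) [AddCommGroup Q] [Module.Free ℤ Q] [Module.Finite ℤ Q]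
    (B : Q →ₗ[ℤ] Q →ₗ[ℤ] ℤ) (hBsymm : ∀ α β : Q, B α β = B β α)
    (N : ℕ) (hN : 0 < N)
    (σ : Q ≃ₗ[ℤ] Q) (hσN : σ ^ N = 1)
    (hσB : ∀ α β : Q, B (σ α) (σ β) = B α β)
    (ε : Q → Q → ℤˣ)
    (hbm1 : ∀ α α' β : Q, ε (α + α') β = ε α β * ε α' β)
    (hbm2 : ∀ α β β' : Q, ε α (β + β') = ε α β * ε α β')
    (hdiag : ∀ α : Q, ε α α = (-1 : ℤˣ) ^ (B α α * (B α α + 1) / 2))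
    (εN : ℂ) (hεN : εN = Complex.exp (2 * Real.pi * Complex.I / N))
    (Bc : Q → Q → ℂ)
    (hBc : ∀ α β : Q, Bc α β = (N : ℂ) ^ (-(B α β) : ℤ) *
      ∏ k ∈ Finset.Icc 1 (N - 1), (1 - εN ^ k) ^ (B ((σ ^ k) α) β))
    (α β : Q) :
    (((ε α β : ℤ) : ℂ) * (Bc α β)⁻¹) * (((ε β α : ℤ) : ℂ) * (Bc β α)⁻¹)⁻¹
      = (-1 : ℂ) ^ (B α α * B β β) *
        ∏ k ∈ Finset.range N, (-(εN ^ k)) ^ (-(B ((σ ^ k) α) β)) := by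
  have hprim : IsPrimitiveRoot εN N := hεN ▸ Complex.isPrimitiveRoot_exp N hN.ne'
  have hroot : εN ^ N = 1 := hprim.pow_eq_one
  have hNne : (N:ℂ) ≠ 0 := Nat.cast_ne_zero.mpr hN.ne'
  have hpowne : ∀ k ∈ Finset.Icc 1 (N-1), (1 - εN ^ k) ≠ 0 := by
    intro k hk h
    simp only [Finset.mem_Icc] at hk
    have h1 : εN ^ k = 1 := by linear_combination -h
    have h2 : N ∣ k := (hprim.pow_eq_one_iff_dvd k).mp h1
    have := Nat.le_of_dvd (by omega) h2
    omega
  have hεNne : εN ≠ 0 := hεN ▸ Complex.exp_ne_zero _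
  -- ε-sign computation
  have hsign : (ε α β) * (ε β α) = (-1:ℤˣ)^(B α β + B α α * B β β) := by
    have h1 := hdiag (α + β)
    rw [hbm1, hbm2, hbm2, hdiag α, hdiag β] at h1
    have hd : B (α+β) (α+β) = B α α + B β β + 2 * B α β := by
      simp only [map_add, LinearMap.add_apply]
      rw [hBsymm β α]; ring
    rw [aux_sign' (B α α) (B β β) (B α β) _ hd] at h1
    have h2 : (-1:ℤˣ)^(B α α*(B α α+1)/2) * (-1:ℤˣ)^(B β β*(B β β+1)/2) * (ε α β * ε β α)
        = (-1:ℤˣ)^(B α α*(B α α+1)/2) * (-1:ℤˣ)^(B β β*(B β β+1)/2) * (-1:ℤˣ)^(B α β + B α α * B β β) := by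
      rw [← h1]
      simp [mul_comm, mul_left_comm, mul_assoc]
    exact mul_left_cancel h2
  -- σ-power invariance
  have hpow : ∀ (j : ℕ) (γ δ : Q), B ((σ^j) γ) ((σ^j) δ) = B γ δ := by
    intro j
    induction j with
    | zero => intro γ δ; simp
    | succ n ih =>
      intro γ δ
      have e : ∀ x : Q, (σ ^ (n+1)) x = (σ ^ n) (σ x) := fun x => by rw [pow_succ]; rfl
      rw [e, e, ih, hσB]
  have hswap : ∀ k ∈ Finset.Icc 1 (N-1), B ((σ^k) β) α = B ((σ^(N-k)) α) β := by
    intro k hk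
    simp only [Finset.mem_Icc] at hk
    have hk' : N - k + k = N := by omega
    have e1 : B ((σ^(N-k)) α) ((σ^(N-k)) ((σ^k) β)) = B α ((σ^k) β) := hpow _ _ _
    have e2 : (σ^(N-k)) ((σ^k) β) = β := by
      have : (σ^(N-k)) ((σ^k) β) = (σ^(N-k+k)) β := by rw [pow_add]; rfl
      rw [this, hk', hσN]; rfl
    rw [e2] at e1
    rw [hBsymm, ← e1]
  -- nonvanishing of Bc
  have hBcne : ∀ γ δ : Q, Bc γ δ ≠ 0 := by
    intro γ δ
    rw [hBc]
    refine mul_ne_zero (zpow_ne_zero _ hNne) ?_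
    rw [Finset.prod_ne_zero_iff]
    intro k hk
    exact zpow_ne_zero _ (hpowne k hk)
  -- key product identity
  have termkey : ∀ k ∈ Finset.Icc 1 (N-1),
      (1 - εN^(N-k)) ^ (B ((σ^k) α) β)
        = (-(εN^k)) ^ (-(B ((σ^k) α) β)) * (1 - εN^k) ^ (B ((σ^k) α) β) := by
    intro k hk
    simp only [Finset.mem_Icc] at hk
    have hNk : εN^(N-k) * εN^k = 1 := by
      rw [← pow_add, show N-k+k = N by omega, hroot]
    have hbase : 1 - εN^(N-k) = (-(εN^(N-k))) * (1 - εN^k) := by linear_combination -hNk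
    have hinv : (-(εN^(N-k))) = (-(εN^k))⁻¹ := by
      refine (inv_eq_of_mul_eq_one_right ?_).symm
      rw [neg_mul_neg]; linear_combination hNk
    rw [hbase, mul_zpow, hinv, inv_zpow, ← zpow_neg]
  have key : Bc β α
      = (∏ k ∈ Finset.Icc 1 (N-1), (-(εN^k)) ^ (-(B ((σ^k) α) β))) * Bc α β := by
    rw [hBc, hBc, hBsymm β α]
    have r1 : ∏ k ∈ Finset.Icc 1 (N-1), (1 - εN^k) ^ (B ((σ^k) β) α)
        = ∏ k ∈ Finset.Icc 1 (N-1), (1 - εN^(N-k)) ^ (B ((σ^k) α) β) := by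
      rw [Finset.prod_congr rfl (fun k hk => by rw [hswap k hk])]
      refine Finset.prod_nbij' (fun k => N - k) (fun k => N - k) ?_ ?_ ?_ ?_ ?_
      · intro k hk; simp only [Finset.mem_Icc] at hk ⊢; omega
      · intro k hk; simp only [Finset.mem_Icc] at hk ⊢; omega
      · intro k hk; simp only [Finset.mem_Icc] at hk; show N - (N - k) = k; omega
      · intro k hk; simp only [Finset.mem_Icc] at hk; show N - (N - k) = k; omega
      · intro k hk
        simp only [Finset.mem_Icc] at hk
        rw [show N - (N - k) = k by omega]
    rw [r1, Finset.prod_congr rfl termkey, Finset.prod_mul_distrib]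
    ring
  -- now the main computation
  have hinvε : (((ε β α : ℤ)):ℂ)⁻¹ = ((ε β α : ℤ):ℂ) := by
    rcases Int.units_eq_one_or (ε β α) with h|h <;> rw [h] <;> norm_num
  have hcast : ∀ m : ℤ, ((((-1:ℤˣ)^m : ℤˣ) : ℤ) : ℂ) = (-1:ℂ)^m := fun m =>
    Int.cast_negOnePow ℂ m
  -- split the RHS product
  have hrange : Finset.range N = insert 0 (Finset.Icc 1 (N-1)) := by
    ext x; simp only [Finset.mem_range, Finset.mem_insert, Finset.mem_Icc]; omega
  have h0 : (0:ℕ) ∉ Finset.Icc 1 (N-1) := by simp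
  have hsplit : ∏ k ∈ Finset.range N, (-(εN ^ k)) ^ (-(B ((σ ^ k) α) β))
      = (-1:ℂ)^(-(B α β)) * ∏ k ∈ Finset.Icc 1 (N-1), (-(εN ^ k)) ^ (-(B ((σ ^ k) α) β)) := by
    rw [hrange, Finset.prod_insert h0]
    congr 1
  -- LHS
  calc (((ε α β : ℤ) : ℂ) * (Bc α β)⁻¹) * (((ε β α : ℤ) : ℂ) * (Bc β α)⁻¹)⁻¹
      = ((ε α β : ℤ) : ℂ) * ((ε β α : ℤ) : ℂ) * (Bc β α * (Bc α β)⁻¹) := by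
        rw [mul_inv, hinvε, inv_inv]; ring
    _ = (-1:ℂ)^(B α β + B α α * B β β) *
          ((∏ k ∈ Finset.Icc 1 (N-1), (-(εN^k)) ^ (-(B ((σ^k) α) β))) * (Bc α β * (Bc α β)⁻¹)) := by
        rw [key]
        have hc : ((ε α β : ℤ) : ℂ) * ((ε β α : ℤ) : ℂ) = (-1:ℂ)^(B α β + B α α * B β β) := by
          rw [← hcast (B α β + B α α * B β β), ← hsign]; push_cast; ring
        rw [hc]; ring
    _ = (-1:ℂ)^(B α β + B α α * B β β) *
          ∏ k ∈ Finset.Icc 1 (N-1), (-(εN^k)) ^ (-(B ((σ^k) α) β)) := by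
        rw [mul_inv_cancel₀ (hBcne α β), mul_one]
    _ = (-1 : ℂ) ^ (B α α * B β β) *
        ∏ k ∈ Finset.range N, (-(εN ^ k)) ^ (-(B ((σ ^ k) α) β)) := by
        rw [hsplit, ← mul_assoc]
        congr 1
        rw [← zpow_add₀ (by norm_num : (-1:ℂ) ≠ 0)]
        exact aux_parC _ _ ⟨B α β, by ring⟩
end

section
/- Let α, β ∈ h be such that (σ^k α | β) ∈ ℤ for all 0 ≤ k ≤ N−1, and suppose α = α_0 + (1−σ)α_*, where σα_0 = α_0 and π_0 α_* = 0. Then ∏_{k=0}^{N−1} (−ε^k)^{−(σ^k α|β)} = exp(πi(α_0|β)) · exp(2πi(α_*|β)). -/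
/-- If `(σ^k α|β) = m_k ∈ ℤ` for `0 ≤ k ≤ N-1` and
`α = α₀ + (1-σ)α✶` with `σα₀ = α₀` and `π₀ α✶ = 0`, then
`∏_{k=0}^{N-1} (-ε^k)^{-(σ^k α|β)} = e^{πi(α₀|β)} e^{2πi(α✶|β)}`. -/
theorem C_formula_exponential
    (h : Type*) [AddCommGroup h] [Module ℂ h] [FiniteDimensional ℂ h]
    (B : h →ₗ[ℂ] h →ₗ[ℂ] ℂ) (hBsymm : ∀ x y : h, B x y = B y x)
    (hBnd : ∀ x : h, (∀ y : h, B x y = 0) → x = 0)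
    (N : ℕ) (hN : 0 < N)
    (σ : Module.End ℂ h) (hσN : σ ^ N = 1)
    (hσB : ∀ x y : h, B (σ x) (σ y) = B x y)
    (ε : ℂ) (hε : ε = Complex.exp (2 * Real.pi * Complex.I / N))
    (α β α₀ αs : h) (m : ℕ → ℤ)
    (hm : ∀ k : ℕ, k ≤ N - 1 → B ((σ ^ k) α) β = (m k : ℂ))
    (hα : α = α₀ + (αs - σ αs))
    (hα₀ : σ α₀ = α₀)
    (hαs : ((N : ℂ)⁻¹ • ∑ k ∈ Finset.range N, σ ^ k) αs = 0) :
    ∏ k ∈ Finset.range N, (-(ε ^ k)) ^ (-(m k))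
      = Complex.exp ((Real.pi : ℂ) * Complex.I * B α₀ β) *
        Complex.exp (2 * (Real.pi : ℂ) * Complex.I * B αs β) := by
  have hNc : (N : ℂ) ≠ 0 := Nat.cast_ne_zero.mpr hN.ne'
  set a : ℂ := B α₀ β with ha
  set c : ℕ → ℂ := fun k => B ((σ ^ k) αs) β with hc
  have hb : B αs β = c 0 := by simp [hc]
  -- σ^k fixes α₀
  have hσkα₀ : ∀ k : ℕ, (σ ^ k) α₀ = α₀ := by
    intro k
    induction k with
    | zero => simp
    | succ n ih => rw [pow_succ, Module.End.mul_apply, hα₀, ih]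
  have hcN : c N = c 0 := by simp [hc, hσN]
  -- sum of σ^k αs vanishes
  have hsum0 : ∑ k ∈ Finset.range N, (σ ^ k) αs = 0 := by
    have := hαs
    rw [LinearMap.smul_apply, smul_eq_zero] at this
    rcases this with h1 | h1
    · exact absurd h1 (inv_ne_zero hNc)
    · rw [← h1, LinearMap.sum_apply]
  have hsumc : ∑ k ∈ Finset.range N, c k = 0 := by
    have : ∑ k ∈ Finset.range N, c k = B (∑ k ∈ Finset.range N, (σ ^ k) αs) β := by
      rw [map_sum, LinearMap.sum_apply]
    rw [this, hsum0, map_zero, LinearMap.zero_apply]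
  -- shifted sum also vanishes
  have hshift : ∑ k ∈ Finset.range N, c (k + 1) = 0 := by
    have h1 := Finset.sum_range_succ' c N
    have h2 := Finset.sum_range_succ c N
    rw [h2, hsumc, hcN] at h1
    linear_combination -h1
  -- formula for m k
  have hm' : ∀ k ∈ Finset.range N, (m k : ℂ) = a + (c k - c (k + 1)) := by
    intro k hk
    rw [Finset.mem_range] at hk
    rw [← hm k (Nat.le_pred_of_lt hk), hα]
    have : (σ ^ (k + 1)) αs = (σ ^ k) (σ αs) := by
      rw [pow_succ, Module.End.mul_apply]
    simp only [map_add, map_sub, hσkα₀ k, LinearMap.add_apply, LinearMap.sub_apply, hc, this, ha]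
  -- the two key sums
  have hM : ∑ k ∈ Finset.range N, (m k : ℂ) = N * a := by
    rw [Finset.sum_congr rfl hm', Finset.sum_add_distrib, Finset.sum_sub_distrib,
      Finset.sum_const, Finset.card_range, hsumc, hshift]
    simp [mul_comm]
  have hM1 : ∑ k ∈ Finset.range N, (k : ℂ) * (m k) =
      (∑ k ∈ Finset.range N, (k : ℂ)) * a - N * c 0 := by
    have key : ∀ k ∈ Finset.range N, (k : ℂ) * (m k) =
        (k : ℂ) * a + (((k : ℂ) * c k - ((k : ℂ) + 1) * c (k + 1)) + c (k + 1)) := by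
      intro k hk
      rw [hm' k hk]; push_cast; ring
    rw [Finset.sum_congr rfl key, Finset.sum_add_distrib, Finset.sum_add_distrib, hshift,
      ← Finset.sum_mul]
    have htel : ∑ k ∈ Finset.range N, ((k : ℂ) * c k - ((k : ℂ) + 1) * c (k + 1)) =
        (0 : ℂ) * c 0 - (N : ℂ) * c N := by
      have := Finset.sum_range_sub' (fun k => (k : ℂ) * c k) N
      simpa using this
    rw [htel, hcN]; ring
  -- Gauss sum
  have hG : (∑ k ∈ Finset.range N, (k : ℂ)) * 2 = N * (N - 1) := by
    have := Finset.sum_range_id_mul_two N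
    have h2 : ((∑ i ∈ Finset.range N, i : ℕ) : ℂ) * 2 = ((N * (N - 1) : ℕ) : ℂ) := by
      exact_mod_cast congrArg (Nat.cast : ℕ → ℂ) this
    rw [Nat.cast_sum] at h2
    rw [h2, Nat.cast_mul, Nat.cast_sub hN]
    push_cast; ring
  -- rewrite each factor as an exponential
  set π : ℝ := Real.pi
  set I : ℂ := Complex.I
  have hfac : ∀ k ∈ Finset.range N, (-(ε ^ k)) ^ (-(m k)) =
      Complex.exp ((-(m k) : ℤ) * ((π : ℂ) * I + k * (2 * π * I / N))) := by
    intro k _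
    have h1 : ε ^ k = Complex.exp ((k : ℂ) * (2 * π * I / N)) := by
      rw [hε, Complex.exp_nat_mul]
    have h2 : -(ε ^ k) = Complex.exp ((π : ℂ) * I + k * (2 * π * I / N)) := by
      rw [Complex.exp_add, Complex.exp_pi_mul_I, h1]; ring
    rw [h2, ← Complex.exp_int_mul]
  rw [Finset.prod_congr rfl hfac, ← Complex.exp_sum, ← Complex.exp_add]
  -- identify the exponents up to an integer multiple of 2πi
  have hE : ∑ k ∈ Finset.range N, ((-(m k) : ℤ) : ℂ) * ((π : ℂ) * I + k * (2 * π * I / N)) =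
      ((π : ℂ) * I * a + 2 * (π : ℂ) * I * c 0) + (-(N * a)) * (2 * π * I) := by
    have hsplit : ∑ k ∈ Finset.range N, ((-(m k) : ℤ) : ℂ) * ((π : ℂ) * I + k * (2 * π * I / N))
        = -((π : ℂ) * I) * (∑ k ∈ Finset.range N, (m k : ℂ))
          - (2 * (π : ℂ) * I / N) * (∑ k ∈ Finset.range N, (k : ℂ) * (m k)) := by
      rw [Finset.mul_sum, Finset.mul_sum, ← Finset.sum_sub_distrib]
      refine Finset.sum_congr rfl fun k _ => ?_
      push_cast; ring
    rw [hsplit, hM, hM1]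
    field_simp
    linear_combination (-((π : ℂ) * I * a)) * hG
  rw [hE, Complex.exp_add, hb]
  have hone : Complex.exp ((-((N : ℂ) * a)) * (2 * (π : ℂ) * I)) = 1 := by
    have hInt : ((∑ k ∈ Finset.range N, m k : ℤ) : ℂ) = (N : ℂ) * a := by
      rw [Int.cast_sum]; exact hM
    have h2 : (-((N : ℂ) * a)) = ((-(∑ k ∈ Finset.range N, m k) : ℤ) : ℂ) := by
      rw [Int.cast_neg, hInt]
    rw [h2, Complex.exp_int_mul_two_pi_mul_I]
  rw [hone, mul_one]
end

section
/- Extend the bilinear form ℚ-bilinearly to V = ℚ ⊗_ℤ Q. Let λ ∈ V and α ∈ Q satisfy (α|α) = 2(λ|α). Then the condition '(λ|β) + |α|²|β|²/2 ∈ ℤ for all β ∈ Q' holds if and only if: (λ|β) ∈ ℤ for all β ∈ Q, in case |α|² is even; and (λ|β) ∈ ℤ for all β ∈ Q_ev, in case |α|² is odd. Here Q_ev = {β ∈ Q : |β|² ∈ 2ℤ}. -/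
/-- For `λ ∈ V = ℚ ⊗ Q` and `α ∈ Q` with `(α|α) = 2(λ|α)`, the condition
`(λ|β) + |α|²|β|²/2 ∈ ℤ for all β ∈ Q` is equivalent to `(λ|β) ∈ ℤ for all β ∈ Q`
when `|α|²` is even, and to `(λ|β) ∈ ℤ for all β ∈ Q_ev` when `|α|²` is odd. -/
theorem center_condition_characterization
    (Q : Type*) [AddCommGroup Q] [Module.Free ℤ Q] [Module.Finite ℤ Q]
    (B : Q →ₗ[ℤ] Q →ₗ[ℤ] ℤ) (hBsymm : ∀ α β : Q, B α β = B β α)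
    (V : Type*) [AddCommGroup V] [Module ℚ V]
    (ι : Q →+ V) (hι : Function.Injective ι)
    (hspan : Submodule.span ℚ (Set.range ι) = ⊤)
    (BV : V →ₗ[ℚ] V →ₗ[ℚ] ℚ) (hBVsymm : ∀ v w : V, BV v w = BV w v)
    (hcompat : ∀ α β : Q, BV (ι α) (ι β) = (B α β : ℚ))
    (lam : V) (α : Q)
    (hlam : (B α α : ℚ) = 2 * BV lam (ι α)) :
    (Even (B α α) →
      ((∀ β : Q, ∃ n : ℤ, BV lam (ι β) + ((B α α * B β β : ℤ) : ℚ) / 2 = (n : ℚ)) ↔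
        (∀ β : Q, ∃ n : ℤ, BV lam (ι β) = (n : ℚ)))) ∧
    (Odd (B α α) →
      ((∀ β : Q, ∃ n : ℤ, BV lam (ι β) + ((B α α * B β β : ℤ) : ℚ) / 2 = (n : ℚ)) ↔
        (∀ β : Q, Even (B β β) → ∃ n : ℤ, BV lam (ι β) = (n : ℚ)))) := by
  constructor
  · rintro ⟨k, hk⟩
    constructor
    · intro h β
      obtain ⟨n, hn⟩ := h β
      refine ⟨n - k * B β β, ?_⟩
      have hk' : (B α α : ℚ) = 2 * (k : ℚ) := by rw [hk]; push_cast; ring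
      push_cast at hn ⊢
      rw [hk'] at hn
      linear_combination hn
    · intro h β
      obtain ⟨n, hn⟩ := h β
      refine ⟨n + k * B β β, ?_⟩
      have hk' : (B α α : ℚ) = 2 * (k : ℚ) := by rw [hk]; push_cast; ring
      push_cast
      rw [hk']
      linear_combination hn
  · rintro ⟨k, hk⟩
    have hk' : (B α α : ℚ) = 2 * (k : ℚ) + 1 := by rw [hk]; push_cast; ring
    constructor
    · intro h β hβ
      obtain ⟨m, hm⟩ := hβ
      obtain ⟨n, hn⟩ := h β
      refine ⟨n - (2 * k + 1) * m, ?_⟩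
      have hm' : (B β β : ℚ) = 2 * (m : ℚ) := by rw [hm]; push_cast; ring
      push_cast at hn ⊢
      rw [hk', hm'] at hn
      linear_combination hn
    · intro h β
      rcases Int.even_or_odd (B β β) with ⟨m, hm⟩ | ⟨m, hm⟩
      · obtain ⟨n, hn⟩ := h β ⟨m, hm⟩
        refine ⟨n + (2 * k + 1) * m, ?_⟩
        have hm' : (B β β : ℚ) = 2 * (m : ℚ) := by rw [hm]; push_cast; ring
        push_cast
        rw [hk', hm']
        linear_combination hn
      · -- B β β is odd, use β + α
        have hsum : B (β + α) (β + α) = B β β + 2 * B α β + B α α := by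
          simp only [map_add, LinearMap.add_apply]
          rw [hBsymm β α]; ring
        have heven : Even (B (β + α) (β + α)) := by
          refine ⟨m + B α β + k + 1, ?_⟩
          rw [hsum, hm, hk]; ring
        obtain ⟨n, hn⟩ := h (β + α) heven
        have hadd : BV lam (ι (β + α)) = BV lam (ι β) + BV lam (ι α) := by
          rw [map_add, map_add]
        refine ⟨n + (2 * k + 1) * m, ?_⟩
        rw [hadd] at hn
        have hfa : BV lam (ι α) = (B α α : ℚ) / 2 := by linarith [hlam]
        have hm' : (B β β : ℚ) = 2 * (m : ℚ) + 1 := by rw [hm]; push_cast; ring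
        push_cast
        rw [hk', hm']
        rw [hfa, hk'] at hn
        linear_combination hn
end

section
/- Let σ: Q → Q be an automorphism of the free ℤ-module Q of finite rank with σ^N = id, and let K = {α ∈ Q : ∑_{k=0}^{N−1} σ^k α = 0}. Then (1−σ)K ⊆ K and the quotient group K / (1−σ)K is finite. -/
/-- Let `K = {α ∈ Q : ∑_{k=0}^{N-1} σ^k α = 0}`. Then `(1-σ)K ⊆ K` and
`K / (1-σ)K` is finite. -/
theorem quotient_by_one_sub_sigma_finite
    (Q : Type*) [AddCommGroup Q] [Module.Free ℤ Q] [Module.Finite ℤ Q]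
    (N : ℕ) (hN : 0 < N)
    (σ : Q ≃ₗ[ℤ] Q) (hσN : σ ^ N = 1)
    (K : Submodule ℤ Q)
    (hK : ∀ α : Q, α ∈ K ↔ ∑ k ∈ Finset.range N, (σ ^ k) α = 0)
    (T : Q →ₗ[ℤ] Q) (hT : T = LinearMap.id - (σ : Q →ₗ[ℤ] Q)) :
    Submodule.map T K ≤ K ∧
      Finite (K ⧸ Submodule.comap K.subtype (Submodule.map T K)) := by
  have hTapp : ∀ α : Q, T α = α - σ α := by
    intro α; rw [hT]; simp
  -- σ commutes with sums of powers
  have hσpow : ∀ (k : ℕ) (α : Q), (σ ^ k) (σ α) = σ ((σ ^ k) α) := by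
    intro k α
    have : σ ^ k * σ = σ * σ ^ k := by
      rw [← pow_succ, ← pow_succ']
    calc (σ ^ k) (σ α) = ((σ ^ k * σ) : Q ≃ₗ[ℤ] Q) α := rfl
      _ = ((σ * σ ^ k) : Q ≃ₗ[ℤ] Q) α := by rw [this]
      _ = σ ((σ ^ k) α) := rfl
  have hmap : Submodule.map T K ≤ K := by
    rintro β ⟨α, hα, rfl⟩
    simp only [SetLike.mem_coe] at hα
    rw [hK] at hα ⊢
    have : ∀ k ∈ Finset.range N, (σ ^ k) (T α) = (σ ^ k) α - σ ((σ ^ k) α) := by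
      intro k _
      rw [hTapp, map_sub, hσpow]
    rw [Finset.sum_congr rfl this, Finset.sum_sub_distrib, hα]
    have : ∑ k ∈ Finset.range N, σ ((σ ^ k) α) = σ (∑ k ∈ Finset.range N, (σ ^ k) α) := by
      rw [map_sum]
    rw [this, hα]
    simp
  refine ⟨hmap, ?_⟩
  -- the quotient is a finitely generated torsion ℤ-module, hence finite
  set P : Submodule ℤ K := Submodule.comap K.subtype (Submodule.map T K)
  have : Module.Finite ℤ (K ⧸ P) := Module.Finite.quotient ℤ P
  apply Module.finite_of_fg_torsion
  intro x
  obtain ⟨⟨α, hα⟩, rfl⟩ := Submodule.Quotient.mk_surjective P x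
  refine ⟨⟨(N : ℤ), mem_nonZeroDivisors_of_ne_zero (by exact_mod_cast hN.ne')⟩, ?_⟩
  show ((N : ℤ)) • (Submodule.Quotient.mk (⟨α, hα⟩ : K) : K ⧸ P) = 0
  rw [← Submodule.Quotient.mk_smul, Submodule.Quotient.mk_eq_zero]
  -- need : (N : ℤ) • ⟨α, hα⟩ ∈ P, i.e. N • α ∈ map T K
  show K.subtype ((N : ℤ) • ⟨α, hα⟩) ∈ Submodule.map T K
  have hSα : ∑ k ∈ Finset.range N, (σ ^ k) α = 0 := (hK α).mp hα
  set β : Q := ∑ k ∈ Finset.range N, ∑ j ∈ Finset.range k, (σ ^ j) α with hβ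
  have hβK : β ∈ K := by
    rw [hK]
    have : ∀ k ∈ Finset.range N, (σ ^ k) β
        = ∑ i ∈ Finset.range N, ∑ j ∈ Finset.range i, (σ ^ k) ((σ ^ j) α) := by
      intro k _
      rw [hβ, map_sum]
      exact Finset.sum_congr rfl fun i _ => by rw [map_sum]
    rw [Finset.sum_congr rfl this, Finset.sum_comm]
    have hz : ∀ i ∈ Finset.range N, ∑ k ∈ Finset.range N,
        ∑ j ∈ Finset.range i, (σ ^ k) ((σ ^ j) α) = 0 := by
      intro i _
      rw [Finset.sum_comm]
      have : ∀ j ∈ Finset.range i, ∑ k ∈ Finset.range N, (σ ^ k) ((σ ^ j) α) = 0 := by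
        intro j _
        have comm : ∀ k : ℕ, (σ ^ k) ((σ ^ j) α) = (σ ^ j) ((σ ^ k) α) := by
          intro k
          calc (σ ^ k) ((σ ^ j) α) = ((σ ^ k * σ ^ j) : Q ≃ₗ[ℤ] Q) α := rfl
            _ = ((σ ^ j * σ ^ k) : Q ≃ₗ[ℤ] Q) α := by rw [← pow_add, ← pow_add, add_comm]
            _ = (σ ^ j) ((σ ^ k) α) := rfl
        rw [Finset.sum_congr rfl fun k _ => comm k, ← map_sum, hSα, map_zero]
      rw [Finset.sum_congr rfl this]
      simp
    rw [Finset.sum_congr rfl hz]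
    simp
  refine ⟨β, hβK, ?_⟩
  -- T β = N • α by telescoping
  have htel : ∀ k : ℕ, T (∑ j ∈ Finset.range k, (σ ^ j) α) = α - (σ ^ k) α := by
    intro k
    rw [hTapp]
    have : σ (∑ j ∈ Finset.range k, (σ ^ j) α) = ∑ j ∈ Finset.range k, (σ ^ (j + 1)) α := by
      rw [map_sum]
      refine Finset.sum_congr rfl fun j _ => ?_
      calc σ ((σ ^ j) α) = ((σ * σ ^ j) : Q ≃ₗ[ℤ] Q) α := rfl
        _ = (σ ^ (j + 1)) α := by rw [← pow_succ']
    rw [this, ← Finset.sum_sub_distrib]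
    have := Finset.sum_range_sub' (fun j => (σ ^ j) α) k
    simpa using this
  have : T β = ∑ k ∈ Finset.range N, (α - (σ ^ k) α) := by
    rw [hβ, map_sum]
    exact Finset.sum_congr rfl fun k _ => htel k
  rw [this, Finset.sum_sub_distrib, hSα, sub_zero, Finset.sum_const, Finset.card_range]
  simp
end

section
/- Let σ extend ℚ-linearly to V = ℚ ⊗_ℤ Q. Define Q_ev = {β ∈ Q : |β|² ∈ 2ℤ}, Q^* = {λ ∈ V : (λ|β) ∈ ℤ for all β ∈ Q}, (Q_ev)^* = {λ ∈ V : (λ|β) ∈ ℤ for all β ∈ Q_ev}, and P_σ = {λ ∈ (Q_ev)^* : (1−σ)λ ∈ Q, and λ ∈ Q^* whenever (1−σ)λ ∈ Q_ev}. Then P_σ is a subgroup of V containing the image of Q. -/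
/-- The set
`P_σ = {λ ∈ (Q_ev)^* : (1-σ)λ ∈ Q, and λ ∈ Q^* whenever (1-σ)λ ∈ Q_ev}`
is a subgroup of `V = ℚ ⊗ Q` containing (the image of) `Q`. -/
theorem P_sigma_subgroup
    (Q : Type*) [AddCommGroup Q] [Module.Free ℤ Q] [Module.Finite ℤ Q]
    (B : Q →ₗ[ℤ] Q →ₗ[ℤ] ℤ) (hBsymm : ∀ α β : Q, B α β = B β α)
    (hBnd : ∀ α : Q, (∀ β : Q, B α β = 0) → α = 0)
    (N : ℕ) (hN : 0 < N)
    (σ : Q ≃ₗ[ℤ] Q) (hσN : σ ^ N = 1)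
    (hσB : ∀ α β : Q, B (σ α) (σ β) = B α β)
    (V : Type*) [AddCommGroup V] [Module ℚ V]
    (ι : Q →+ V) (hι : Function.Injective ι)
    (hspan : Submodule.span ℚ (Set.range ι) = ⊤)
    (BV : V →ₗ[ℚ] V →ₗ[ℚ] ℚ) (hBVsymm : ∀ v w : V, BV v w = BV w v)
    (hcompat : ∀ α β : Q, BV (ι α) (ι β) = (B α β : ℚ))
    (σV : V →ₗ[ℚ] V) (hσV : ∀ α : Q, σV (ι α) = ι (σ α)) :
    ∃ P : AddSubgroup V,
      (P : Set V) =
        {lam : V |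
          (∀ β : Q, Even (B β β) → ∃ n : ℤ, BV lam (ι β) = (n : ℚ)) ∧
          (∃ γ : Q, lam - σV lam = ι γ) ∧
          ((∃ γ : Q, Even (B γ γ) ∧ lam - σV lam = ι γ) →
            ∀ β : Q, ∃ n : ℤ, BV lam (ι β) = (n : ℚ))} ∧
      ∀ γ : Q, ι γ ∈ P := by
  classical
  -- σV preserves BV
  have h1 : BV.compl₁₂ σV σV = BV := by
    apply LinearMap.ext_on hspan
    rintro _ ⟨α, rfl⟩
    apply LinearMap.ext_on hspan
    rintro _ ⟨β, rfl⟩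
    simp [LinearMap.compl₁₂_apply, hσV, hcompat, hσB]
  have hσVB : ∀ v w : V, BV (σV v) (σV w) = BV v w := by
    intro v w
    have := LinearMap.congr_fun (LinearMap.congr_fun h1 v) w
    simpa [LinearMap.compl₁₂_apply] using this
  -- expansion of norms
  have hpar : ∀ α β : Q, B (α + β) (α + β) = B α α + B β β + 2 * B α β := by
    intro α β
    simp only [map_add, LinearMap.add_apply, hBsymm β α]
    ring
  -- key A : 2 ⟨λ, γ⟩ = |γ|²
  have keyA : ∀ lam : V, ∀ γ : Q, lam - σV lam = ι γ →
      2 * BV lam (ι γ) = (B γ γ : ℚ) := by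
    intro lam γ hγ
    have e1 : σV lam = lam - ι γ := by rw [← hγ]; abel
    have hinv := hσVB lam lam
    rw [e1] at hinv
    simp only [map_sub, LinearMap.sub_apply] at hinv
    have hs := hBVsymm lam (ι γ)
    have hc := hcompat γ γ
    linarith [hinv, hs, hc]
  -- key C : for odd γ and odd β, ⟨λ, β⟩ ∈ ℤ + |γ|²/2
  have keyC : ∀ lam : V, ∀ γ : Q,
      (∀ β : Q, Even (B β β) → ∃ n : ℤ, BV lam (ι β) = (n : ℚ)) →
      lam - σV lam = ι γ → ¬ Even (B γ γ) →
      ∀ β : Q, ¬ Even (B β β) → ∃ n : ℤ, BV lam (ι β) = (n : ℚ) + (B γ γ : ℚ) / 2 := by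
    intro lam γ ha hγ hodd β hoddβ
    have hev : Even (B (β - γ) (β - γ)) := by
      have h2 : B (β - γ) (β - γ) = B β β + B γ γ - 2 * B β γ := by
        have h3 := hpar β (-γ)
        simp only [map_neg, LinearMap.neg_apply, neg_neg] at h3
        rw [← sub_eq_add_neg] at h3
        linarith
      rw [Int.not_even_iff_odd] at hodd hoddβ
      obtain ⟨a, ha'⟩ := hodd
      obtain ⟨b, hb'⟩ := hoddβ
      exact ⟨b + a + 1 - B β γ, by linarith⟩
    obtain ⟨m, hm⟩ := ha (β - γ) hev
    refine ⟨m, ?_⟩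
    have hβ : ι β = ι (β - γ) + ι γ := by rw [← map_add]; congr 1; abel
    have := keyA lam γ hγ
    rw [hβ, map_add, hm]
    linarith
  let S : Set V := {lam : V |
          (∀ β : Q, Even (B β β) → ∃ n : ℤ, BV lam (ι β) = (n : ℚ)) ∧
          (∃ γ : Q, lam - σV lam = ι γ) ∧
          ((∃ γ : Q, Even (B γ γ) ∧ lam - σV lam = ι γ) →
            ∀ β : Q, ∃ n : ℤ, BV lam (ι β) = (n : ℚ))}
  refine ⟨{ carrier := S, zero_mem' := ?_, add_mem' := ?_, neg_mem' := ?_ }, rfl, ?_⟩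
  · rintro lam mu ⟨ha1, ⟨γ1, hγ1⟩, hc1⟩ ⟨ha2, ⟨γ2, hγ2⟩, hc2⟩
    have hsum : (lam + mu) - σV (lam + mu) = ι (γ1 + γ2) := by
      rw [map_add, map_add, ← hγ1, ← hγ2]; abel
    refine ⟨?_, ⟨γ1 + γ2, hsum⟩, ?_⟩
    · intro β hβ
      obtain ⟨n, hn⟩ := ha1 β hβ
      obtain ⟨m, hm⟩ := ha2 β hβ
      exact ⟨n + m, by rw [map_add, LinearMap.add_apply, hn, hm]; push_cast; ring⟩
    · rintro ⟨δ, hδev, hδ⟩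
      have hδeq : δ = γ1 + γ2 := hι (by rw [← hδ, ← hsum])
      subst hδeq
      by_cases hev1 : Even (B γ1 γ1)
      · have hev2 : Even (B γ2 γ2) := by
          have h2 := hpar γ1 γ2
          rcases hδev with ⟨a, ha⟩
          rcases hev1 with ⟨b, hb⟩
          exact ⟨a - b - B γ1 γ2, by omega⟩
        intro β
        obtain ⟨n, hn⟩ := hc1 ⟨γ1, hev1, hγ1⟩ β
        obtain ⟨m, hm⟩ := hc2 ⟨γ2, hev2, hγ2⟩ β
        exact ⟨n + m, by rw [map_add, LinearMap.add_apply, hn, hm]; push_cast; ring⟩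
      · have hev2 : ¬ Even (B γ2 γ2) := by
          intro h
          apply hev1
          have h2 := hpar γ1 γ2
          rcases hδev with ⟨a, ha⟩
          rcases h with ⟨b, hb⟩
          exact ⟨a - b - B γ1 γ2, by omega⟩
        intro β
        by_cases hβ : Even (B β β)
        · obtain ⟨n, hn⟩ := ha1 β hβ
          obtain ⟨m, hm⟩ := ha2 β hβ
          exact ⟨n + m, by rw [map_add, LinearMap.add_apply, hn, hm]; push_cast; ring⟩
        · obtain ⟨n, hn⟩ := keyC lam γ1 ha1 hγ1 hev1 β hβ
          obtain ⟨m, hm⟩ := keyC mu γ2 ha2 hγ2 hev2 β hβ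
          rw [Int.not_even_iff_odd] at hev1 hev2
          obtain ⟨a, ha⟩ := hev1
          obtain ⟨b, hb⟩ := hev2
          refine ⟨n + m + a + b + 1, ?_⟩
          rw [map_add, LinearMap.add_apply, hn, hm, ha, hb]
          push_cast; ring
  · exact ⟨fun β _ => ⟨0, by simp⟩, ⟨0, by simp⟩, fun _ β => ⟨0, by simp⟩⟩
  · rintro lam ⟨ha, ⟨γ, hγ⟩, hc⟩
    have hneg : (-lam) - σV (-lam) = ι (-γ) := by
      rw [map_neg, map_neg, ← hγ]; abel
    refine ⟨?_, ⟨-γ, hneg⟩, ?_⟩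
    · intro β hβ
      obtain ⟨n, hn⟩ := ha β hβ
      exact ⟨-n, by rw [map_neg, LinearMap.neg_apply, hn]; push_cast; ring⟩
    · rintro ⟨δ, hδev, hδ⟩
      have hδeq : δ = -γ := hι (by rw [← hδ, ← hneg])
      subst hδeq
      have hγev : Even (B γ γ) := by simpa using hδev
      intro β
      obtain ⟨n, hn⟩ := hc ⟨γ, hγev, hγ⟩ β
      exact ⟨-n, by rw [map_neg, LinearMap.neg_apply, hn]; push_cast; ring⟩
  · intro γ0
    refine ⟨?_, ⟨γ0 - σ γ0, ?_⟩, ?_⟩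
    · intro β _
      exact ⟨B γ0 β, by rw [hcompat]⟩
    · rw [map_sub, hσV]
    · intro _ β
      exact ⟨B γ0 β, by rw [hcompat]⟩
end
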